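/- Let a > 0, b > 0, and H ≥ 0 be real numbers. Then ∫₀¹ ω^(a-1) (1-ω)^(b-1) exp(-Hω) dω ≥ exp(-H) · B(a,b) · (1 + (b/(a+b))·H), where B(a,b) is the Beta function. -/

import Mathlib

/-! Since `e^{-Hω} = e^{-H} e^{H(1-ω)} ≥ e^{-H} (1 + H(1-ω))`, the integral is at least
`e^{-H} (B(a,b) + H·B(a,b+1))`, and `B(a,b+1) = b/(a+b)·B(a,b)`. -/

open MeasureTheory intervalIntegral Real ProbabilityTheory

lemma Complex.ofReal_rpow_mul_one_sub_rpow_eqOn (a b : ℝ) :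
    Set.EqOn (fun x : ℝ => ((x ^ (a - 1) * (1 - x) ^ (b - 1) : ℝ) : ℂ))
      (fun x : ℝ => (x : ℂ) ^ ((a : ℂ) - 1) * (1 - (x : ℂ)) ^ ((b : ℂ) - 1))
      (Set.uIcc 0 1) := by
  intro x hx
  rw [Set.uIcc_of_le zero_le_one] at hx
  push_cast
  rw [Complex.ofReal_cpow hx.1, Complex.ofReal_cpow (sub_nonneg.2 hx.2)]
  push_cast
  rfl

lemma intervalIntegrable_rpow_mul_one_sub_rpow {a b : ℝ} (ha : 0 < a) (hb : 0 < b) :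
    IntervalIntegrable (fun x : ℝ => x ^ (a - 1) * (1 - x) ^ (b - 1)) volume 0 1 := by
  have hC : IntervalIntegrable (fun x : ℝ => ((x ^ (a - 1) * (1 - x) ^ (b - 1) : ℝ) : ℂ))
      volume 0 1 :=
    (Complex.betaIntegral_convergent (by simpa) (by simpa)).congr fun x hx =>
      (Complex.ofReal_rpow_mul_one_sub_rpow_eqOn a b (Set.uIoc_subset_uIcc hx)).symm
  have hre : IntervalIntegrable
      (fun x => RCLike.re (((x ^ (a - 1) * (1 - x) ^ (b - 1) : ℝ) : ℂ))) volume 0 1 :=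
    ⟨hC.1.re, hC.2.re⟩
  simpa using hre

lemma integral_rpow_mul_one_sub_rpow {a b : ℝ} (ha : 0 < a) (hb : 0 < b) :
    ∫ x in (0 : ℝ)..1, x ^ (a - 1) * (1 - x) ^ (b - 1) = beta a b := by
  have h : Complex.betaIntegral a b =
      ((∫ x in (0 : ℝ)..1, x ^ (a - 1) * (1 - x) ^ (b - 1) : ℝ) : ℂ) := by
    rw [Complex.betaIntegral, ← intervalIntegral.integral_ofReal]
    exact (integral_congr (Complex.ofReal_rpow_mul_one_sub_rpow_eqOn a b)).symm
  rw [beta_eq_betaIntegralReal a b ha hb, h, Complex.ofReal_re]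

lemma beta_add_one_right {a b : ℝ} (hb : b ≠ 0) (hab : a + b ≠ 0) :
    beta a (b + 1) = b / (a + b) * beta a b := by
  rw [beta, beta, ← add_assoc, Gamma_add_one hb, Gamma_add_one hab, mul_left_comm,
    mul_div_mul_comm]

lemma rpow_mul_one_sub_rpow_mul_one_sub_eqOn (a b : ℝ) (hb : b ≠ 0) :
    Set.EqOn (fun x : ℝ => x ^ (a - 1) * (1 - x) ^ (b - 1) * (1 - x))
      (fun x : ℝ => x ^ (a - 1) * (1 - x) ^ (b + 1 - 1)) (Set.uIcc 0 1) := by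
  intro x hx
  rw [Set.uIcc_of_le zero_le_one] at hx
  simp only [add_sub_cancel_right, mul_assoc]
  rw [← rpow_add_one' (sub_nonneg.2 hx.2) (by simpa using hb), sub_add_cancel]

lemma intervalIntegrable_rpow_mul_one_sub_rpow_mul_one_sub {a b : ℝ} (ha : 0 < a) (hb : 0 < b) :
    IntervalIntegrable (fun x : ℝ => x ^ (a - 1) * (1 - x) ^ (b - 1) * (1 - x)) volume 0 1 :=
  (intervalIntegrable_rpow_mul_one_sub_rpow ha (b := b + 1) (by linarith)).congr fun _ hx =>
    (rpow_mul_one_sub_rpow_mul_one_sub_eqOn a b hb.ne' (Set.uIoc_subset_uIcc hx)).symm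

lemma integral_rpow_mul_one_sub_rpow_mul_one_sub {a b : ℝ} (ha : 0 < a) (hb : 0 < b) :
    ∫ x in (0 : ℝ)..1, x ^ (a - 1) * (1 - x) ^ (b - 1) * (1 - x) = b / (a + b) * beta a b := by
  rw [integral_congr (rpow_mul_one_sub_rpow_mul_one_sub_eqOn a b hb.ne'),
    integral_rpow_mul_one_sub_rpow ha (by linarith),
    beta_add_one_right hb.ne' (by linarith)]

lemma exp_neg_mul_one_add_le_exp_neg_mul (H ω : ℝ) :
    exp (-H) * (1 + H * (1 - ω)) ≤ exp (-H * ω) :=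
  calc exp (-H) * (1 + H * (1 - ω)) ≤ exp (-H) * exp (H * (1 - ω)) := by
        gcongr
        linarith [add_one_le_exp (H * (1 - ω))]
    _ = exp (-H * ω) := by rw [← exp_add]; ring_nf

theorem fhs_normalizing_lower_general (a b H : ℝ) (ha : 0 < a) (hb : 0 < b) :
    ∫ ω in (0:ℝ)..1, ω ^ (a - 1) * (1 - ω) ^ (b - 1) * Real.exp (-H * ω) ≥
      Real.exp (-H) * (Real.Gamma a * Real.Gamma b / Real.Gamma (a + b)) *
        (1 + (b / (a + b)) * H) := by
  set p : ℝ → ℝ := fun ω => ω ^ (a - 1) * (1 - ω) ^ (b - 1)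
  have hp := intervalIntegrable_rpow_mul_one_sub_rpow ha hb
  have hq := intervalIntegrable_rpow_mul_one_sub_rpow_mul_one_sub ha hb
  show exp (-H) * beta a b * (1 + b / (a + b) * H) ≤ ∫ ω in (0:ℝ)..1, p ω * exp (-H * ω)
  calc exp (-H) * beta a b * (1 + b / (a + b) * H)
      = ∫ ω in (0:ℝ)..1, exp (-H) * p ω + exp (-H) * H * (p ω * (1 - ω)) := by
        rw [integral_add (hp.const_mul _) (hq.const_mul _), intervalIntegral.integral_const_mul,
          intervalIntegral.integral_const_mul, integral_rpow_mul_one_sub_rpow ha hb,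
          integral_rpow_mul_one_sub_rpow_mul_one_sub ha hb]
        ring
    _ ≤ ∫ ω in (0:ℝ)..1, p ω * exp (-H * ω) := by
        refine integral_mono_on zero_le_one ((hp.const_mul _).add (hq.const_mul _))
          (hp.mul_continuousOn (by fun_prop)) fun ω hω => ?_
        have hpω : 0 ≤ p ω :=
          mul_nonneg (rpow_nonneg hω.1 _) (rpow_nonneg (sub_nonneg.2 hω.2) _)
        linarith [mul_le_mul_of_nonneg_left (exp_neg_mul_one_add_le_exp_neg_mul H ω) hpω]

/-- Lower bound on the normalizing constant (part of Lemma 3):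
`∫₀¹ ω^(a-1)(1-ω)^(b-1)e^(-Hω) dω ≥ e^(-H) B(a,b) (1 + (b/(a+b)) H)`. -/
theorem fhs_normalizing_lower (a b H : ℝ) (ha : 0 < a) (hb : 0 < b) (hH : 0 ≤ H) :
    ∫ ω in (0:ℝ)..1, ω ^ (a - 1) * (1 - ω) ^ (b - 1) * Real.exp (-H * ω) ≥
      Real.exp (-H) * (Real.Gamma a * Real.Gamma b / Real.Gamma (a + b)) *
        (1 + (b / (a + b)) * H) :=
  fhs_normalizing_lower_general a b H ha hb
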